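/- arXiv:math/0611790 — 2 statements merged into one kernel-verified Lean document; each statement's English description precedes it below -/
import Mathlib

section
/- Let K be a field and R = K[x1,…,x6] the polynomial ring in six variables over K, and let I be the ideal of R generated by the monomials x1x3, x1x4, x1x6, x2x4, x2x5, x3x5, x3x6, x4x6. Then I equals the radical of the ideal generated by the four polynomials x1x6, x3x5, x1x3 + x2x4 + x3x6, x1x4 + x2x5 + x4x6. -/
/-!
`I` is generated by squarefree monomials, so it is radical: if a monomial `m` in the support of
`f` is divisible by no generator, the prime ideal spanned by the variables absent from `m`
contains `I` but not `f`, hence no power of `f`. Since the four polynomials generating `J` lie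
in `I`, this gives `√J ≤ I`. Conversely, in the reduced ring `R ⧸ √J` the four relations force
the eight generators of `I` to vanish: each of `x₂x₄, x₂x₅, x₃x₆, x₄x₆` has its square in the
ideal generated by the relations and the previously treated products, and `x₁x₃, x₁x₄` are then
linear in them.
-/

open MvPolynomial

theorem Finsupp.sum_single_one_le {σ : Type*} {t : Finset σ} {m : σ →₀ ℕ}
    (h : ∀ i ∈ t, m i ≠ 0) :
    ∑ i ∈ t, Finsupp.single i 1 ≤ m := by
  classical
  intro k
  simp only [Finsupp.coe_finsetSum, Finset.sum_apply, Finsupp.single_apply, Finset.sum_ite_eq']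
  split_ifs with hk
  · exact Nat.one_le_iff_ne_zero.2 (h k hk)
  · exact Nat.zero_le _

namespace MvPolynomial

variable {σ R : Type*} [CommRing R]

theorem ker_aeval_ite_X_eq_span_X_image (S : Set σ) [DecidablePred (· ∈ S)] :
    RingHom.ker (aeval (R := R) fun i => if i ∈ S then 0 else (X i : MvPolynomial σ R)) =
      Ideal.span (X '' S) := by
  set I : Ideal (MvPolynomial σ R) := Ideal.span (X '' S)
  refine le_antisymm (fun f hf => ?_) (Ideal.span_le.2 ?_)
  · -- substituting `0` for the variables in `S` is the identity modulo `I`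
    have hmod : (Ideal.Quotient.mkₐ R I).comp (aeval fun i => if i ∈ S then 0 else X i) =
        Ideal.Quotient.mkₐ R I := by
      refine algHom_ext fun i => ?_
      by_cases hi : i ∈ S
      · simpa [hi] using
          (Ideal.Quotient.eq_zero_iff_mem.2 (Ideal.subset_span (Set.mem_image_of_mem X hi))).symm
      · simp [hi]
    rw [← Ideal.Quotient.eq_zero_iff_mem, ← Ideal.Quotient.mkₐ_eq_mk R, ← hmod, AlgHom.comp_apply,
      (RingHom.mem_ker).1 hf, map_zero]
  · rintro _ ⟨i, hi, rfl⟩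
    simp [hi]

theorem isPrime_span_X_image [IsDomain R] (S : Set σ) :
    (Ideal.span (X '' S : Set (MvPolynomial σ R))).IsPrime := by
  classical
  rw [← ker_aeval_ite_X_eq_span_X_image]
  exact RingHom.ker_isPrime _

theorem isRadical_span_prod_X [IsDomain R] (T : Set (Finset σ)) :
    (Ideal.span ((fun t => ∏ i ∈ t, X i) '' T : Set (MvPolynomial σ R))).IsRadical := by
  rintro f ⟨n, hfn⟩
  have hmon : ((fun t => ∏ i ∈ t, X i) '' T : Set (MvPolynomial σ R)) =
      (fun s => monomial s 1) '' ((fun t => ∑ i ∈ t, Finsupp.single i 1) '' T) := by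
    simp only [Set.image_image, monomial_sum_one]
    rfl
  rw [hmon, mem_ideal_span_monomial_image]
  intro m hm
  by_contra! hm_not_mem
  have hle : Ideal.span ((fun t => ∏ i ∈ t, X i) '' T) ≤
      Ideal.span (X '' {i | m i = 0} : Set (MvPolynomial σ R)) := by
    refine Ideal.span_le.2 ?_
    rintro _ ⟨t, ht, rfl⟩
    obtain ⟨i, hit, hi⟩ : ∃ i ∈ t, m i = 0 := by
      by_contra! h
      exact hm_not_mem _ ⟨t, ht, rfl⟩ (Finsupp.sum_single_one_le h)
    exact Ideal.mem_of_dvd _ (Finset.dvd_prod_of_mem _ hit)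
      (Ideal.subset_span (Set.mem_image_of_mem X hi))
  obtain ⟨i, hi, hne⟩ := mem_ideal_span_X_image.1
    ((isPrime_span_X_image _).mem_of_pow_mem n (hle hfn)) m hm
  exact hne hi

end MvPolynomial


theorem products_eq_zero_of_isReduced {A : Type*} [CommRing A] [IsReduced A] (y : Fin 6 → A)
    (h05 : y 0 * y 5 = 0) (h24 : y 2 * y 4 = 0)
    (hc : y 0 * y 2 + y 1 * y 3 + y 2 * y 5 = 0) (hd : y 0 * y 3 + y 1 * y 4 + y 3 * y 5 = 0) :
    y 0 * y 2 = 0 ∧ y 0 * y 3 = 0 ∧ y 1 * y 3 = 0 ∧ y 1 * y 4 = 0 ∧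
      y 2 * y 5 = 0 ∧ y 3 * y 5 = 0 := by
  have h13 : y 1 * y 3 = 0 := pow_eq_zero_iff two_ne_zero |>.1 <| by
    linear_combination y 1 * y 3 * hc - y 1 * y 2 * hd + y 1 ^ 2 * h24
  have h14 : y 1 * y 4 = 0 := pow_eq_zero_iff two_ne_zero |>.1 <| by
    linear_combination y 1 * y 4 * hd - (y 0 + y 5) * y 4 * hc + (y 0 + y 5) ^ 2 * h24
  have h25 : y 2 * y 5 = 0 := pow_eq_zero_iff two_ne_zero |>.1 <| by
    linear_combination y 2 * y 5 * hc - y 2 ^ 2 * h05 - y 2 * y 5 * h13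
  have h35 : y 3 * y 5 = 0 := pow_eq_zero_iff two_ne_zero |>.1 <| by
    linear_combination y 3 * y 5 * hd - y 3 ^ 2 * h05 - y 3 * y 5 * h14
  exact ⟨by linear_combination hc - h13 - h25, by linear_combination hd - h14 - h35,
    h13, h14, h25, h35⟩

/-- **Example 3 (Barile).** In `R = K[x₁,…,x₆]`, the ideal
`I = (x₁x₃, x₁x₄, x₁x₆, x₂x₄, x₂x₅, x₃x₅, x₃x₆, x₄x₆)` satisfies
`I = √(x₁x₆, x₃x₅, x₁x₃ + x₂x₄ + x₃x₆, x₁x₄ + x₂x₅ + x₄x₆)`.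
(The variables `x₁,…,x₆` are `X 0, …, X 5`.) -/
theorem heptagonal_eq_radical_four (K : Type*) [Field K] :
    Ideal.span ({X 0 * X 2, X 0 * X 3, X 0 * X 5, X 1 * X 3, X 1 * X 4,
        X 2 * X 4, X 2 * X 5, X 3 * X 5} : Set (MvPolynomial (Fin 6) K)) =
      (Ideal.span ({X 0 * X 5, X 2 * X 4,
        X 0 * X 2 + X 1 * X 3 + X 2 * X 5,
        X 0 * X 3 + X 1 * X 4 + X 3 * X 5} : Set (MvPolynomial (Fin 6) K))).radical := by
  set I := Ideal.span ({X 0 * X 2, X 0 * X 3, X 0 * X 5, X 1 * X 3, X 1 * X 4,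
        X 2 * X 4, X 2 * X 5, X 3 * X 5} : Set (MvPolynomial (Fin 6) K))
  set J := Ideal.span ({X 0 * X 5, X 2 * X 4,
        X 0 * X 2 + X 1 * X 3 + X 2 * X 5,
        X 0 * X 3 + X 1 * X 4 + X 3 * X 5} : Set (MvPolynomial (Fin 6) K))
  have hI : I.IsRadical := by
    have hgen : I = Ideal.span ((fun t => ∏ i ∈ t, X i) ''
        {{0, 2}, {0, 3}, {0, 5}, {1, 3}, {1, 4}, {2, 4}, {2, 5}, {3, 5}}) := by
      simp [I, Set.image_insert_eq]
    exact hgen ▸ isRadical_span_prod_X _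
  have hJI : J ≤ I := by
    have mem {p} (hp : p ∈ ({X 0 * X 2, X 0 * X 3, X 0 * X 5, X 1 * X 3, X 1 * X 4,
        X 2 * X 4, X 2 * X 5, X 3 * X 5} : Set (MvPolynomial (Fin 6) K))) : p ∈ I :=
      Ideal.subset_span hp
    simp only [J, Ideal.span_le, Set.insert_subset_iff, Set.singleton_subset_iff]
    refine ⟨mem (by simp), mem (by simp), ?_, ?_⟩ <;>
      exact I.add_mem (I.add_mem (mem (by simp)) (mem (by simp))) (mem (by simp))
  refine le_antisymm ?_ (hI.radical_le_iff.2 hJI)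
  have : IsReduced (MvPolynomial (Fin 6) K ⧸ J.radical) :=
    (Ideal.isRadical_iff_quotient_reduced _).1 J.radical_isRadical
  have hJ : ∀ p ∈ _, Ideal.Quotient.mk J.radical p = 0 := fun p hp =>
    Ideal.Quotient.eq_zero_iff_mem.2 (Ideal.le_radical (Ideal.subset_span hp))
  simp only [Set.forall_mem_insert, Set.mem_singleton_iff, forall_eq, map_add, map_mul] at hJ
  obtain ⟨h05, h24, hc, hd⟩ := hJ
  obtain ⟨h02, h03, h13, h14, h25, h35⟩ := products_eq_zero_of_isReduced
    (fun i => Ideal.Quotient.mk J.radical (X i)) h05 h24 hc hd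
  simp only [I, Ideal.span_le, Set.insert_subset_iff, Set.singleton_subset_iff, SetLike.mem_coe,
    ← Ideal.Quotient.eq_zero_iff_mem, map_mul]
  exact ⟨h02, h03, h05, h13, h14, h24, h25, h35⟩
end

section
/- Let K be an algebraically closed field and R = K[x1,…,x6]. Let I be the ideal of R generated by the monomials x1x3, x1x4, x1x5, x2x4, x2x6, x3x5, x3x6, x4x6. Then I equals the radical of the ideal generated by the four polynomials x1x4, x3x6, x1x3 + x1x5 + x2x4, x2x6 + x3x5 + x4x6. -/
/-!
A squarefree monomial ideal is radical: if some monomial `m` of `f` is divisible by no generator,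
then killing the variables outside the support of `m` annihilates the ideal but not `f`, so no
power of `f` lies in the ideal. The four polynomials span an ideal `J ≤ I`, whence `√J ≤ I`.
Conversely, in the reduced ring `R ⧸ √J` each of the eight products has square in the ideal
spanned by the four relations and the products already known to vanish, so it is zero.
-/

open MvPolynomial

namespace MvPolynomial

variable {σ R : Type*} [CommRing R]

theorem isRadical_span_monomial_image [IsReduced R] {A : Set (σ →₀ ℕ)}
    (hA : ∀ s ∈ A, ∀ i, s i ≤ 1) :
    (Ideal.span ((fun s => monomial s (1 : R)) '' A)).IsRadical := by
  rintro f ⟨n, hn⟩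
  rw [mem_ideal_span_monomial_image]
  intro m hm
  by_contra! hnot
  let φ := killCompl (R := R) (Subtype.val_injective (p := (· ∈ m.support)))
  have hker : Ideal.span ((fun s => monomial s (1 : R)) '' A) ≤ RingHom.ker φ := by
    rw [Ideal.span_le]
    rintro _ ⟨s, hs, rfl⟩
    obtain ⟨i, hi⟩ : ∃ i, m i < s i := by simpa [Finsupp.le_def] using hnot s hs
    have hsi : s i = 1 := le_antisymm (hA s hs i) (by omega)
    exact killCompl_monomial_eq_zero_of_notMem_range _ _ (a := i) (by simp [hsi])
      (by simp; omega)
  have hφf : φ f = 0 := IsNilpotent.eq_zero ⟨n, by rw [← map_pow]; exact hker hn⟩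
  have := congrArg (coeff (m.comapDomain Subtype.val Subtype.val_injective.injOn)) hφf
  rw [coeff_killCompl, Finsupp.mapDomain_comapDomain _ Subtype.val_injective _
    fun i hi => by simpa using hi, coeff_zero] at this
  exact mem_support_iff.mp hm this

theorem isRadical_span_X_mul_X [IsReduced R] {E : Set (σ × σ)} (hE : ∀ e ∈ E, e.1 ≠ e.2) :
    (Ideal.span ((fun e => X e.1 * X e.2) '' E : Set (MvPolynomial σ R))).IsRadical := by
  have hmon : (fun e : σ × σ => (X e.1 * X e.2 : MvPolynomial σ R)) =
      (fun s => monomial s 1) ∘ fun e => Finsupp.single e.1 1 + Finsupp.single e.2 1 := by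
    ext1 e; simp [X, monomial_mul]
  rw [hmon, Set.image_comp]
  refine isRadical_span_monomial_image ?_
  rintro _ ⟨e, he, rfl⟩ i
  have := hE e he
  by_cases h1 : e.1 = i <;> by_cases h2 : e.2 = i <;> simp_all

end MvPolynomial

section Example8

variable (R : Type*) [CommRing R]

noncomputable def example8EdgeIdeal : Ideal (MvPolynomial (Fin 6) R) :=
  Ideal.span {X 0 * X 2, X 0 * X 3, X 0 * X 4, X 1 * X 3, X 1 * X 5,
    X 2 * X 4, X 2 * X 5, X 3 * X 5}

noncomputable def example8FourIdeal : Ideal (MvPolynomial (Fin 6) R) :=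
  Ideal.span {X 0 * X 3, X 2 * X 5, X 0 * X 2 + X 0 * X 4 + X 1 * X 3,
    X 1 * X 5 + X 2 * X 4 + X 3 * X 5}

theorem isRadical_example8EdgeIdeal [IsReduced R] : (example8EdgeIdeal R).IsRadical := by
  have hE : example8EdgeIdeal R = Ideal.span ((fun e => X e.1 * X e.2) ''
      {(0, 2), (0, 3), (0, 4), (1, 3), (1, 5), (2, 4), (2, 5), (3, 5)}) := by
    simp [example8EdgeIdeal, Set.image_insert_eq]
  rw [hE]
  exact isRadical_span_X_mul_X (by simp)

theorem example8FourIdeal_le_edgeIdeal : example8FourIdeal R ≤ example8EdgeIdeal R := by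
  rw [example8FourIdeal, Ideal.span_le]
  simp only [Set.insert_subset_iff, Set.singleton_subset_iff, SetLike.mem_coe]
  refine ⟨?_, ?_, add_mem (add_mem ?_ ?_) ?_, add_mem (add_mem ?_ ?_) ?_⟩ <;>
    exact Ideal.subset_span (by simp)

variable {R} in
theorem example8_products_eq_zero [IsReduced R] (y : Fin 6 → R) (h03 : y 0 * y 3 = 0)
    (h25 : y 2 * y 5 = 0) (h3 : y 0 * y 2 + y 0 * y 4 + y 1 * y 3 = 0)
    (h4 : y 1 * y 5 + y 2 * y 4 + y 3 * y 5 = 0) :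
    y 0 * y 2 = 0 ∧ y 0 * y 4 = 0 ∧ y 1 * y 3 = 0 ∧ y 1 * y 5 = 0 ∧ y 2 * y 4 = 0 ∧
      y 3 * y 5 = 0 := by
  have h13 : y 1 * y 3 = 0 := IsNilpotent.eq_zero ⟨2, by
    linear_combination y 1 * y 3 * h3 - (y 1 * y 2 + y 1 * y 4) * h03⟩
  have h24 : y 2 * y 4 = 0 := IsNilpotent.eq_zero ⟨2, by
    linear_combination y 2 * y 4 * h4 - (y 1 * y 4 + y 3 * y 4) * h25⟩
  refine ⟨IsNilpotent.eq_zero ⟨2, ?_⟩, IsNilpotent.eq_zero ⟨2, ?_⟩, h13,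
    IsNilpotent.eq_zero ⟨2, ?_⟩, h24, IsNilpotent.eq_zero ⟨2, ?_⟩⟩
  · linear_combination y 0 * y 2 * h3 - y 0 ^ 2 * h24 - y 1 * y 2 * h03
  · linear_combination y 0 * y 4 * h3 - y 0 ^ 2 * h24 - y 1 * y 4 * h03
  · linear_combination y 1 * y 5 * h4 - y 5 ^ 2 * h13 - y 1 * y 4 * h25
  · linear_combination y 3 * y 5 * h4 - y 5 ^ 2 * h13 - y 3 * y 4 * h25

theorem example8EdgeIdeal_le_radical :
    example8EdgeIdeal R ≤ (example8FourIdeal R).radical := by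
  let J := (example8FourIdeal R).radical
  have : IsReduced (MvPolynomial (Fin 6) R ⧸ J) :=
    (Ideal.isRadical_iff_quotient_reduced _).mp (Ideal.radical_isRadical _)
  have hJ : ∀ g ∈ ({X 0 * X 3, X 2 * X 5, X 0 * X 2 + X 0 * X 4 + X 1 * X 3,
      X 1 * X 5 + X 2 * X 4 + X 3 * X 5} : Set (MvPolynomial (Fin 6) R)),
      Ideal.Quotient.mk J g = 0 := fun g hg =>
    Ideal.Quotient.eq_zero_iff_mem.2 (Ideal.le_radical (Ideal.subset_span hg))
  simp only [Set.mem_insert_iff, Set.mem_singleton_iff, forall_eq_or_imp, forall_eq,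
    map_add, map_mul] at hJ
  obtain ⟨h03, h25, h3, h4⟩ := hJ
  obtain ⟨h02, h04, h13, h15, h24, h35⟩ :=
    example8_products_eq_zero (fun i => Ideal.Quotient.mk J (X i)) h03 h25 h3 h4
  rw [example8EdgeIdeal, Ideal.span_le]
  simp only [Set.insert_subset_iff, Set.singleton_subset_iff, SetLike.mem_coe,
    ← Ideal.Quotient.eq_zero_iff_mem, map_mul]
  exact ⟨h02, h03, h04, h13, h15, h24, h25, h35⟩

end Example8

theorem example8_eq_radical_four_general (K : Type*) [Field K] :
    Ideal.span ({X 0 * X 2, X 0 * X 3, X 0 * X 4, X 1 * X 3, X 1 * X 5,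
        X 2 * X 4, X 2 * X 5, X 3 * X 5} : Set (MvPolynomial (Fin 6) K)) =
      (Ideal.span ({X 0 * X 3, X 2 * X 5,
        X 0 * X 2 + X 0 * X 4 + X 1 * X 3,
        X 1 * X 5 + X 2 * X 4 + X 3 * X 5} : Set (MvPolynomial (Fin 6) K))).radical :=
  le_antisymm (example8EdgeIdeal_le_radical K)
    ((isRadical_example8EdgeIdeal K).radical_le_iff.2 (example8FourIdeal_le_edgeIdeal K))

/-- **Example 8 (Barile).** Let `K` be algebraically closed and `R = K[x₁,…,x₆]`.
The ideal `I = (x₁x₃, x₁x₄, x₁x₅, x₂x₄, x₂x₆, x₃x₅, x₃x₆, x₄x₆)` satisfies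
`I = √(x₁x₄, x₃x₆, x₁x₃ + x₁x₅ + x₂x₄, x₂x₆ + x₃x₅ + x₄x₆)`.
(The variables `x₁,…,x₆` are `X 0, …, X 5`.) -/
theorem example8_eq_radical_four (K : Type*) [Field K] [IsAlgClosed K] :
    Ideal.span ({X 0 * X 2, X 0 * X 3, X 0 * X 4, X 1 * X 3, X 1 * X 5,
        X 2 * X 4, X 2 * X 5, X 3 * X 5} : Set (MvPolynomial (Fin 6) K)) =
      (Ideal.span ({X 0 * X 3, X 2 * X 5,
        X 0 * X 2 + X 0 * X 4 + X 1 * X 3,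
        X 1 * X 5 + X 2 * X 4 + X 3 * X 5} : Set (MvPolynomial (Fin 6) K))).radical :=
  example8_eq_radical_four_general K
end
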